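/- Let F be the finite field with 25 elements. The number of rational points (including the point at infinity) of the elliptic curve over F with Weierstrass equation y² = x³ + 3x is divisible by 5. -/

import Mathlib

instance : Fact (Nat.Prime 5) := ⟨by norm_num⟩

/-- The curve `y² = x³ + 3x` over the field `𝔽₂₅` with 25 elements. -/
noncomputable def Ebar25 : WeierstrassCurve.Affine (GaloisField 5 2) :=
  { a₁ := 0, a₂ := 0, a₃ := 0, a₄ := 3, a₆ := 0 }

/-!
The point `(1, 2)` is already defined over `𝔽₅ ⊆ 𝔽₂₅`, and it has order `5`: its double is
`(4, 1)`, whose double is `(1, 3) = -(1, 2)`. Lagrange's theorem in `E(𝔽₂₅)` concludes.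
-/

namespace WeierstrassCurve.Affine

instance {R : Type*} [CommRing R] [Finite R] (W : Affine R) : Finite W.Point :=
  have : Finite (WithZero {xy : R × R // W.Nonsingular xy.1 xy.2}) :=
    inferInstanceAs (Finite (Option _))
  .of_equiv _ W.nonsingularPointEquiv.symm

/-- The tangent slope is given through the linear equation it solves rather than as a quotient:
inversion in `ZMod p` does not reduce in the kernel, while these hypotheses are then `decide`-able. -/
lemma Point.some_add_self_of_slope {F : Type*} [Field F] [DecidableEq F] {W : Affine F}
    {x y ℓ x' y' : F} {h : W.Nonsingular x y} {h' : W.Nonsingular x' y'} (hy : y ≠ W.negY x y)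
    (hℓ : 3 * x ^ 2 + 2 * W.a₂ * x + W.a₄ - W.a₁ * y = ℓ * (y - W.negY x y))
    (hx' : W.addX x x ℓ = x') (hy' : W.addY x x y ℓ = y') :
    some x y h + some x y h = some x' y' h' := by
  have hslope : W.slope x x y y = ℓ := by
    rw [slope_of_Y_ne rfl hy, div_eq_iff (sub_ne_zero.mpr hy), hℓ]
  rw [add_self_of_Y_ne hy]
  subst hx' hy' hslope
  rfl

end WeierstrassCurve.Affine

theorem prime_dvd_natCard_of_nsmul_eq_zero {G : Type*} [AddGroup G] [Finite G] {p : ℕ}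
    [Fact p.Prime] {x : G} (hx : p • x = 0) (hx0 : x ≠ 0) : p ∣ Nat.card G :=
  addOrderOf_eq_prime hx hx0 ▸ addOrderOf_dvd_natCard x

open WeierstrassCurve.Affine Point

def curveX3Add3X : WeierstrassCurve ℤ :=
  { a₁ := 0, a₂ := 0, a₃ := 0, a₄ := 3, a₆ := 0 }

lemma Ebar25_eq_baseChange : Ebar25 = curveX3Add3X⁄(GaloisField 5 2) := by
  ext <;> simp [Ebar25, curveX3Add3X]

namespace curveX3Add3X

lemma nonsingular_one_two : (curveX3Add3X⁄(ZMod 5)).Nonsingular 1 2 := by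
  rw [nonsingular_iff, equation_iff]
  decide

lemma nonsingular_four_one : (curveX3Add3X⁄(ZMod 5)).Nonsingular 4 1 := by
  rw [nonsingular_iff, equation_iff]
  decide

lemma five_nsmul_some_one_two : 5 • some 1 2 nonsingular_one_two = 0 := by
  set P := some 1 2 nonsingular_one_two
  have double_P : P + P = some 4 1 nonsingular_four_one :=
    some_add_self_of_slope (ℓ := 4) (by decide) (by decide) (by decide) (by decide)
  have double_double_P : some 4 1 nonsingular_four_one + some 4 1 nonsingular_four_one = -P :=
    some_add_self_of_slope (ℓ := 3) (by decide) (by decide) (by decide) (by decide)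
  calc 5 • P = (P + P) + (P + P) + P := by abel
    _ = 0 := by rw [double_P, double_double_P, neg_add_cancel]

end curveX3Add3X

/-- Example 2.5: the number of rational points (including the point at infinity) of the elliptic
curve `y² = x³ + 3x` over the field with 25 elements is divisible by 5. -/
theorem stmt_13 : 5 ∣ Nat.card Ebar25.Point := by
  classical
  rw [Ebar25_eq_baseChange]
  refine prime_dvd_natCard_of_nsmul_eq_zero
    (x := baseChange (ZMod 5) (GaloisField 5 2) (some 1 2 curveX3Add3X.nonsingular_one_two)) ?_ ?_
  · rw [← map_nsmul, curveX3Add3X.five_nsmul_some_one_two, _root_.map_zero]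
  · exact some_ne_zero _
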